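/- arXiv:2408.15713 — 2 statements merged into one kernel-verified Lean document; each statement's English description precedes it below -/
import Mathlib

section
/- Let d ≥ 1 and let x_1, …, x_n ∈ ℂ^d be vectors, and let a_1, …, a_n be complex numbers with |a_j| ≤ 1 for all j. Then there exist complex numbers b_1, …, b_n with |b_j| = 1 for all j such that ‖∑_{j=1}^n b_j x_j − ∑_{j=1}^n a_j x_j‖_∞ ≤ d · max_{1 ≤ j ≤ n} ‖x_j‖_∞. -/
/-!
Among all coefficient vectors `c` in the closed unit polydisc with `∑ c j • x j = ∑ a j • x j`
(a compact set), take an extreme point `c`, which exists by Krein–Milman. If more than `d`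
coordinates of `c` lay in the open disc, some nonzero `u` supported on them would satisfy
`∑ u j • x j = 0`, and `c ± t • u` would stay in the set for small `t`, contradicting extremality.
Rounding each `c j` radially to the unit circle moves it by `1 - ‖c j‖`, which vanishes off
those at most `d` coordinates and is at most `1` on them.
-/

open Finset Module Filter Topology

theorem exists_ne_zero_sum_smul_eq_zero_of_finrank_lt_card {K V ι : Type*} [Field K]
    [AddCommGroup V] [Module K V] [FiniteDimensional K V] [Fintype ι] (x : ι → V)
    {s : Finset ι} (hs : finrank K V < #s) :
    ∃ u : ι → K, u ≠ 0 ∧ (∀ j ∉ s, u j = 0) ∧ ∑ j, u j • x j = 0 := by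
  classical
  have hdep : ¬LinearIndepOn K x s := fun h =>
    hs.not_ge (by simpa using h.fintype_card_le_finrank)
  obtain ⟨f, hf, i, hi, hfi⟩ := not_linearIndepOn_finset_iff.1 hdep
  refine ⟨fun j => if j ∈ s then f j else 0, fun h => hfi (by simpa [hi] using congr_fun h i),
    fun j hj => if_neg hj, ?_⟩
  simpa [ite_smul, Finset.sum_ite_mem] using hf

theorem norm_sum_smul_le_card_mul_iSup {𝕜 E ι : Type*} [NormedField 𝕜]
    [SeminormedAddCommGroup E] [NormedSpace 𝕜 E] [Fintype ι] (x : ι → E) {w : ι → 𝕜}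
    {s : Finset ι} (hw : ∀ j, ‖w j‖ ≤ 1) (hws : ∀ j ∉ s, w j = 0) :
    ‖∑ j, w j • x j‖ ≤ #s * ⨆ j, ‖x j‖ := by
  rw [← Finset.sum_subset s.subset_univ fun j _ hj => by rw [hws j hj, zero_smul]]
  calc ‖∑ j ∈ s, w j • x j‖ ≤ ∑ j ∈ s, ‖w j‖ * ‖x j‖ :=
        norm_sum_le_of_le s fun j _ => norm_smul_le _ _
    _ ≤ ∑ _j ∈ s, ⨆ j, ‖x j‖ := Finset.sum_le_sum fun j _ =>
        (mul_le_of_le_one_left (norm_nonneg _) (hw j)).trans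
          (le_ciSup (Finite.bddAbove_range fun j => ‖x j‖) j)
    _ = #s * ⨆ j, ‖x j‖ := by rw [sum_const, nsmul_eq_mul]

theorem Complex.exists_norm_eq_one_norm_sub_eq {z : ℂ} (hz : ‖z‖ ≤ 1) :
    ∃ w : ℂ, ‖w‖ = 1 ∧ ‖w - z‖ = 1 - ‖z‖ := by
  rcases eq_or_ne z 0 with rfl | hz0
  · exact ⟨1, by simp⟩
  have hpos : 0 < ‖z‖ := norm_pos_iff.2 hz0
  refine ⟨(‖z‖⁻¹ : ℝ) • z, norm_smul_inv_norm hz0, ?_⟩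
  have hinv : 1 ≤ ‖z‖⁻¹ := (one_le_inv₀ hpos).2 hz
  have hsub : (‖z‖⁻¹ : ℝ) • z - z = (‖z‖⁻¹ - 1 : ℝ) • z := by rw [sub_smul, one_smul]
  rw [hsub, norm_smul, Real.norm_of_nonneg (by linarith), sub_mul, inv_mul_cancel₀ hpos.ne',
    one_mul]

theorem eventually_norm_add_mul_le_one {ι : Type*} [Finite ι] {c u : ι → ℂ}
    (hc : ∀ j, ‖c j‖ ≤ 1) (hu : ∀ j, ‖c j‖ = 1 → u j = 0) :
    ∀ᶠ t in 𝓝 (0 : ℂ), ∀ j, ‖c j + t * u j‖ ≤ 1 := by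
  refine eventually_all.2 fun j => ?_
  rcases (hc j).lt_or_eq with hlt | heq
  · have hcont : Continuous fun t : ℂ => ‖c j + t * u j‖ := by fun_prop
    filter_upwards [hcont.continuousAt.eventually_lt continuousAt_const (by simpa using hlt)]
      with t ht using ht.le
  · simp [hu j heq, hc j]

section Polydisc

variable {ι E : Type*} [Fintype ι] [NormedAddCommGroup E] [NormedSpace ℂ E]

def polydiscFiber (x : ι → E) (y : E) : Set (ι → ℂ) :=
  {c | (∀ j, ‖c j‖ ≤ 1) ∧ ∑ j, c j • x j = y}

theorem isCompact_polydiscFiber (x : ι → E) (y : E) : IsCompact (polydiscFiber x y) := by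
  refine (isCompact_closedBall (0 : ι → ℂ) 1).of_isClosed_subset ?_ fun c hc => ?_
  · simp only [polydiscFiber, Set.ofPred_and, Set.ofPred_forall]
    exact (isClosed_iInter fun j => isClosed_le (by fun_prop) continuous_const).inter
      (isClosed_eq (by fun_prop) continuous_const)
  · simpa [pi_norm_le_iff_of_nonneg] using hc.1

theorem card_norm_lt_one_le_finrank [FiniteDimensional ℂ E] {x : ι → E} {y : E} {c : ι → ℂ}
    (hc : c ∈ (polydiscFiber x y).extremePoints ℝ) :
    #{j | ‖c j‖ < 1} ≤ finrank ℂ E := by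
  classical
  by_contra! hlt
  obtain ⟨u, hu0, hus, hux⟩ := exists_ne_zero_sum_smul_eq_zero_of_finrank_lt_card x hlt
  obtain ⟨⟨hc1, hcy⟩, hext⟩ := hc
  have hu : ∀ j, ‖c j‖ = 1 → u j = 0 := fun j hj => hus j (by simp [hj])
  obtain ⟨ε, hε, hball⟩ := Metric.eventually_nhds_iff.1 (eventually_norm_add_mul_le_one hc1 hu)
  have hmem : ∀ t : ℂ, dist t 0 < ε → c + t • u ∈ polydiscFiber x y := fun t ht =>
    ⟨hball ht, by simp [add_smul, sum_add_distrib, mul_smul, ← smul_sum, hux, hcy]⟩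
  set t : ℂ := ((ε / 2 : ℝ) : ℂ)
  have ht : dist t 0 < ε := by simp [t, abs_of_pos hε, hε]
  have hsub : c - t • u = c + (-t) • u := by rw [neg_smul, sub_eq_add_neg]
  have hfix :=
    hext (hmem t ht) (hsub ▸ hmem (-t) (by simpa using ht)) (mem_openSegment_add_sub c _)
  have ht0 : t ≠ 0 := by simp [t, hε.ne']
  exact hu0 (smul_eq_zero.1 (add_eq_left.1 hfix) |>.resolve_left ht0)

theorem exists_norm_eq_one_norm_sum_smul_sub_le [FiniteDimensional ℂ E] (x : ι → E) {a : ι → ℂ}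
    (ha : ∀ j, ‖a j‖ ≤ 1) :
    ∃ b : ι → ℂ, (∀ j, ‖b j‖ = 1) ∧
      ‖∑ j, b j • x j - ∑ j, a j • x j‖ ≤ finrank ℂ E * ⨆ j, ‖x j‖ := by
  classical
  obtain ⟨c, hc⟩ := (isCompact_polydiscFiber x _).extremePoints_nonempty ⟨a, ha, rfl⟩
  have hcard := card_norm_lt_one_le_finrank hc
  obtain ⟨⟨hc1, hcy⟩, -⟩ := hc
  choose b hb1 hbc using fun j => Complex.exists_norm_eq_one_norm_sub_eq (hc1 j)
  refine ⟨b, hb1, ?_⟩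
  have hdiff : ∑ j, b j • x j - ∑ j, a j • x j = ∑ j, (b j - c j) • x j := by
    simp only [← hcy, ← sum_sub_distrib, sub_smul]
  rw [hdiff]
  calc ‖∑ j, (b j - c j) • x j‖ ≤ #{j | ‖c j‖ < 1} * ⨆ j, ‖x j‖ :=
        norm_sum_smul_le_card_mul_iSup x (fun j => by rw [hbc j]; linarith [norm_nonneg (c j)])
          fun j hj => by
            rw [← norm_eq_zero, hbc j]
            simp only [mem_filter, mem_univ, true_and, not_lt] at hj
            linarith [hc1 j]
    _ ≤ finrank ℂ E * ⨆ j, ‖x j‖ :=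
        mul_le_mul_of_nonneg_right (mod_cast hcard) (Real.iSup_nonneg fun j => norm_nonneg _)

end Polydisc

theorem stmt2_general (d n : ℕ) (x : Fin n → (Fin d → ℂ)) (a : Fin n → ℂ)
    (ha : ∀ j, ‖a j‖ ≤ 1) :
    ∃ b : Fin n → ℂ, (∀ j, ‖b j‖ = 1) ∧
      ‖(∑ j, b j • x j) - ∑ j, a j • x j‖ ≤ (d : ℝ) * ⨆ j, ‖x j‖ := by
  simpa [Module.finrank_fin_fun] using exists_norm_eq_one_norm_sum_smul_sub_le x ha

/-- Rounding lemma: coefficients in the closed unit disc can be replaced by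
unimodular ones, changing the sum by at most d · max ‖x_j‖ in sup norm. -/
theorem stmt2 (d n : ℕ) (hd : 1 ≤ d) (x : Fin n → (Fin d → ℂ)) (a : Fin n → ℂ)
    (ha : ∀ j, ‖a j‖ ≤ 1) :
    ∃ b : Fin n → ℂ, (∀ j, ‖b j‖ = 1) ∧
      ‖(∑ j, b j • x j) - ∑ j, a j • x j‖ ≤ (d : ℝ) * ⨆ j, ‖x j‖ :=
  stmt2_general d n x a ha
end

section
/- Let r_1 : [1, ∞) → ℂ be locally of bounded variation with r_1(1) = 0, and define r_j(x) = ∫_1^x r_{j−1}(t) dt for j ≥ 2. Then for every j ≥ 1 and x ≥ x_0 ≥ 1, r_j(x) = ∑_{m=0}^{j−1} r_{j−m}(x_0) (x − x_0)^m / m! + (1/(j−1)!) ∫_{x_0}^{x} (x − t)^{j−1} dr_1(t), where the last integral is a Riemann–Stieltjes integral. -/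
open MeasureTheory

/-- The Riemann–Stieltjes integral (1/(j−1)!)⁻¹-normalized remainder
∫_{x₀}^x (x − t)^{j−1} dr₁(t), expressed via its integration-by-parts formula
(valid for locally BV r₁ since t ↦ (x−t)^{j−1} is continuous): for j = 1 it is
r₁(x) − r₁(x₀), and for j ≥ 2 it equals
−(x−x₀)^{j−1} r₁(x₀) + (j−1) ∫_{x₀}^x (x−t)^{j−2} r₁(t) dt. -/
noncomputable def rsRemainder (r₁ : ℝ → ℂ) (j : ℕ) (x₀ x : ℝ) : ℂ :=
  if j = 1 then r₁ x - r₁ x₀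
  else -((x - x₀ : ℂ)) ^ (j - 1) * r₁ x₀ +
    ((j : ℂ) - 1) * ∫ t in x₀..x, ((x - t : ℝ) : ℂ) ^ (j - 2) * r₁ t

/-!
Induction on `j`: since `R (j + 1) x = R (j + 1) x₀ + ∫_{x₀}^x R j`, integrating the expansion
of `R j` over `[x₀, x]` raises the Taylor polynomial by one degree and integrates the remainder.
For `j ≥ 2` the remainder is `(j - 1) ∫_{x₀}^x (x - t)^(j-2) (r₁ t - r₁ x₀) dt`, so integrating
it once more is the Cauchy formula for repeated integration, i.e. Fubini on the triangle
`x₀ ≤ s ≤ t ≤ x`.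
-/

open Set Nat

section RCLike
variable {𝕜 : Type*} [RCLike 𝕜]

theorem integrable_triangle_indicator {K : ℝ → ℝ → 𝕜} (hK : Continuous (Function.uncurry K))
    {f : ℝ → 𝕜} {a b : ℝ} (hf : IntegrableOn f (Ioc a b)) :
    Integrable ({p : ℝ × ℝ | p.2 ≤ p.1}.indicator fun p => K p.1 p.2 * f p.2)
      ((volume.restrict (Ioc a b)).prod (volume.restrict (Ioc a b))) := by
  obtain ⟨C, hC⟩ := (isCompact_Icc.prod isCompact_Icc).exists_bound_of_continuousOn
    (s := Icc a b ×ˢ Icc a b) hK.continuousOn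
  have hdom : Integrable (fun p : ℝ × ℝ => C * ‖f p.2‖)
      ((volume.restrict (Ioc a b)).prod (volume.restrict (Ioc a b))) :=
    (hf.norm.comp_snd _).const_mul C
  refine hdom.mono' (((hK.aestronglyMeasurable).mul hf.aestronglyMeasurable.comp_snd).indicator
    (measurableSet_le measurable_snd measurable_fst)) ?_
  rw [Measure.prod_restrict]
  filter_upwards [ae_restrict_mem (measurableSet_Ioc.prod measurableSet_Ioc)] with p hp
  rw [norm_indicator_eq_indicator_norm]
  refine (indicator_le_self' fun _ _ => by positivity) p |>.trans ?_
  exact (norm_mul_le _ _).trans <| mul_le_mul_of_nonneg_right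
    (hC p ⟨Ioc_subset_Icc_self hp.1, Ioc_subset_Icc_self hp.2⟩) (norm_nonneg _)

theorem setIntegral_triangle_indicator_left (K : ℝ → ℝ → 𝕜) (f : ℝ → 𝕜) {a b t : ℝ}
    (ht : t ∈ Ioc a b) :
    ∫ s in Ioc a b, {p : ℝ × ℝ | p.2 ≤ p.1}.indicator (fun p => K p.1 p.2 * f p.2) (t, s)
      = ∫ s in a..t, K t s * f s := by
  have : (fun s => {p : ℝ × ℝ | p.2 ≤ p.1}.indicator (fun p => K p.1 p.2 * f p.2) (t, s))
      = (Iic t).indicator fun s => K t s * f s := by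
    ext s; simp [indicator_apply]
  rw [this, integral_indicator measurableSet_Iic, Measure.restrict_restrict measurableSet_Iic,
    Iic_inter_Ioc_of_le ht.2, intervalIntegral.integral_of_le ht.1.le]

theorem setIntegral_triangle_indicator_right (K : ℝ → ℝ → 𝕜) (f : ℝ → 𝕜) {a b s : ℝ}
    (hs : s ∈ Ioc a b) :
    ∫ t in Ioc a b, {p : ℝ × ℝ | p.2 ≤ p.1}.indicator (fun p => K p.1 p.2 * f p.2) (t, s)
      = (∫ t in s..b, K t s) * f s := by
  have : (fun t => {p : ℝ × ℝ | p.2 ≤ p.1}.indicator (fun p => K p.1 p.2 * f p.2) (t, s))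
      = (Ici s).indicator fun t => K t s * f s := by
    ext t; simp [indicator_apply]
  have hIcc : Ici s ∩ Ioc a b = Icc s b := by
    ext t; simp only [mem_inter_iff, mem_Ici, mem_Ioc, mem_Icc]
    exact ⟨fun h => ⟨h.1, h.2.2⟩, fun h => ⟨h.1, hs.1.trans_le h.1, h.2⟩⟩
  rw [this, integral_indicator measurableSet_Ici, Measure.restrict_restrict measurableSet_Ici,
    hIcc, integral_Icc_eq_integral_Ioc, ← intervalIntegral.integral_of_le hs.2,
    intervalIntegral.integral_mul_const]

theorem integral_integral_triangle_swap {K : ℝ → ℝ → 𝕜}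
    (hK : Continuous (Function.uncurry K)) {f : ℝ → 𝕜} {a b : ℝ} (hab : a ≤ b)
    (hf : IntegrableOn f (Ioc a b)) :
    ∫ t in a..b, ∫ s in a..t, K t s * f s = ∫ s in a..b, (∫ t in s..b, K t s) * f s := by
  simp only [intervalIntegral.integral_of_le hab]
  calc ∫ t in Ioc a b, ∫ s in a..t, K t s * f s
      = ∫ t in Ioc a b, ∫ s in Ioc a b,
          {p : ℝ × ℝ | p.2 ≤ p.1}.indicator (fun p => K p.1 p.2 * f p.2) (t, s) :=
        setIntegral_congr_fun measurableSet_Ioc fun t ht =>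
          (setIntegral_triangle_indicator_left K f ht).symm
    _ = ∫ s in Ioc a b, ∫ t in Ioc a b,
          {p : ℝ × ℝ | p.2 ≤ p.1}.indicator (fun p => K p.1 p.2 * f p.2) (t, s) :=
        integral_integral_swap (integrable_triangle_indicator hK hf)
    _ = ∫ s in Ioc a b, (∫ t in s..b, K t s) * f s :=
        setIntegral_congr_fun measurableSet_Ioc fun s hs =>
          setIntegral_triangle_indicator_right K f hs

end RCLike

theorem integral_sub_lower_pow (a b : ℝ) (m : ℕ) :
    ∫ t in a..b, ((t - a : ℝ) : ℂ) ^ m = ((b - a : ℝ) : ℂ) ^ (m + 1) / (m + 1) := by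
  simp_rw [← Complex.ofReal_pow, intervalIntegral.integral_ofReal,
    intervalIntegral.integral_comp_sub_right (fun u => u ^ m), integral_pow]
  simp

theorem integral_upper_sub_pow (a b : ℝ) (m : ℕ) :
    ∫ t in a..b, ((b - t : ℝ) : ℂ) ^ m = ((b - a : ℝ) : ℂ) ^ (m + 1) / (m + 1) := by
  simp_rw [← Complex.ofReal_pow, intervalIntegral.integral_ofReal,
    intervalIntegral.integral_comp_sub_left (fun u => u ^ m), integral_pow]
  simp

theorem integral_integral_sub_pow_mul {f : ℝ → ℂ} {a b : ℝ} (hab : a ≤ b)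
    (hf : IntegrableOn f (Ioc a b)) (k : ℕ) :
    ∫ t in a..b, ∫ s in a..t, ((t - s : ℝ) : ℂ) ^ k * f s
      = ∫ s in a..b, ((b - s : ℝ) : ℂ) ^ (k + 1) / (k + 1) * f s := by
  rw [integral_integral_triangle_swap (K := fun t s => ((t - s : ℝ) : ℂ) ^ k) (by fun_prop) hab hf]
  simp_rw [integral_sub_lower_pow]

theorem integral_sum_pow_div_factorial (c : ℕ → ℂ) (a b : ℝ) (n : ℕ) :
    ∫ t in a..b, ∑ m ∈ Finset.range n, c m * ((t : ℂ) - a) ^ m / m !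
      = ∑ m ∈ Finset.range n, c m * ((b : ℂ) - a) ^ (m + 1) / (m + 1)! := by
  rw [intervalIntegral.integral_finsetSum fun m _ =>
    (by fun_prop : Continuous _).intervalIntegrable a b]
  refine Finset.sum_congr rfl fun m _ => ?_
  simp_rw [mul_div_right_comm _ _ (m ! : ℂ), ← Complex.ofReal_sub,
    intervalIntegral.integral_const_mul, integral_sub_lower_pow, Nat.factorial_succ]
  push_cast
  field_simp

theorem rsRemainder_eq_integral {r : ℝ → ℂ} {x₀ x : ℝ} (hr : IntervalIntegrable r volume x₀ x)
    {j : ℕ} (hj : 2 ≤ j) :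
    rsRemainder r j x₀ x = (j - 1) * ∫ t in x₀..x, ((x - t : ℝ) : ℂ) ^ (j - 2) * (r t - r x₀) := by
  obtain ⟨k, rfl⟩ := Nat.exists_eq_add_of_le' hj
  have hsplit : ∫ t in x₀..x, ((x - t : ℝ) : ℂ) ^ k * (r t - r x₀)
      = (∫ t in x₀..x, ((x - t : ℝ) : ℂ) ^ k * r t)
        - (∫ t in x₀..x, ((x - t : ℝ) : ℂ) ^ k) * r x₀ := by
    simp_rw [mul_sub]
    rw [intervalIntegral.integral_sub (hr.continuousOn_mul (by fun_prop))
      ((by fun_prop : Continuous _).intervalIntegrable _ _), intervalIntegral.integral_mul_const]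
  rw [rsRemainder, if_neg (by omega), Nat.add_sub_cancel, hsplit, integral_upper_sub_pow]
  push_cast
  field_simp
  ring

theorem integral_rsRemainder {r : ℝ → ℂ} {x₀ x : ℝ} (hx : x₀ ≤ x)
    (hr : IntervalIntegrable r volume x₀ x) {j : ℕ} (hj : 1 ≤ j) :
    ∫ t in x₀..x, rsRemainder r j x₀ t = rsRemainder r (j + 1) x₀ x / j := by
  rw [rsRemainder_eq_integral hr (by omega)]
  obtain rfl | ⟨k, rfl⟩ : j = 1 ∨ ∃ k, j = k + 2 := by
    rcases j with _ | _ | k <;> simp_all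
  · norm_num [rsRemainder]
  have hsub : IntegrableOn (fun s => r s - r x₀) (Ioc x₀ x) :=
    (intervalIntegrable_iff_integrableOn_Ioc_of_le hx).1 (hr.sub intervalIntegrable_const)
  have hrem : EqOn (rsRemainder r (k + 2) x₀)
      (fun t => (k + 1) * ∫ s in x₀..t, ((t - s : ℝ) : ℂ) ^ k * (r s - r x₀)) (uIcc x₀ x) := by
    intro t ht
    rw [rsRemainder_eq_integral (hr.mono_set (uIcc_subset_uIcc_left ht)) le_add_self]
    simp only [Nat.add_sub_cancel]
    push_cast
    ring
  rw [intervalIntegral.integral_congr hrem, intervalIntegral.integral_const_mul,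
    integral_integral_sub_pow_mul (f := fun s => r s - r x₀) hx hsub]
  simp_rw [show k + 2 + 1 - 2 = k + 1 from rfl, div_mul_eq_mul_div, intervalIntegral.integral_div]
  generalize ∫ t in x₀..x, ((x - t : ℝ) : ℂ) ^ (k + 1) * (r t - r x₀) = I
  have hk : (k : ℂ) + 2 ≠ 0 := by norm_cast
  push_cast
  field_simp
  ring

theorem intervalIntegrable_iteratedPrimitive {r₁ : ℝ → ℂ} (hloc : LocallyIntegrable r₁)
    {R : ℕ → ℝ → ℂ} (hR1 : R 1 = r₁)
    (hRrec : ∀ j : ℕ, 2 ≤ j → ∀ x : ℝ, R j x = ∫ t in (1 : ℝ)..x, R (j - 1) t)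
    {j : ℕ} (hj : 1 ≤ j) : ∀ a b : ℝ, IntervalIntegrable (R j) volume a b := by
  induction j, hj using Nat.le_induction with
  | base =>
    exact hR1 ▸ fun a b => (hloc.integrableOn_isCompact isCompact_uIcc).intervalIntegrable
  | succ j hj ih =>
    have hprim : R (j + 1) = fun x => ∫ t in (1 : ℝ)..x, R j t :=
      funext fun x => by simpa using hRrec (j + 1) (by omega) x
    exact hprim ▸ (intervalIntegral.continuous_primitive ih 1).intervalIntegrable

theorem stmt15_general (r₁ : ℝ → ℂ) (hloc : LocallyIntegrable r₁)
    (R : ℕ → ℝ → ℂ) (hR1 : R 1 = r₁)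
    (hRrec : ∀ j : ℕ, 2 ≤ j → ∀ x : ℝ, R j x = ∫ t in (1 : ℝ)..x, R (j - 1) t) :
    ∀ j : ℕ, 1 ≤ j → ∀ x₀ x : ℝ, 1 ≤ x₀ → x₀ ≤ x →
      R j x = (∑ m ∈ Finset.range j,
          R (j - m) x₀ * ((x - x₀ : ℂ)) ^ m / (Nat.factorial m : ℂ)) +
        (1 / (Nat.factorial (j - 1) : ℂ)) * rsRemainder r₁ j x₀ x := by
  intro j hj
  induction j, hj using Nat.le_induction with
  | base => simp [rsRemainder, hR1]
  | succ j hj ih =>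
    intro x₀ x hx₀ hx
    have hRj := intervalIntegrable_iteratedPrimitive hloc hR1 hRrec hj
    have hr₁ : IntervalIntegrable r₁ volume x₀ x :=
      hR1 ▸ intervalIntegrable_iteratedPrimitive hloc hR1 hRrec le_rfl x₀ x
    have hprim : R (j + 1) x = R (j + 1) x₀ + ∫ t in x₀..x, R j t := by
      simp only [hRrec (j + 1) (by omega), Nat.add_sub_cancel]
      rw [← intervalIntegral.integral_add_adjacent_intervals (hRj 1 x₀) (hRj x₀ x)]
    have hsplit : ∫ t in x₀..x, R j t
        = (∫ t in x₀..x, ∑ m ∈ Finset.range j, R (j - m) x₀ * ((t : ℂ) - x₀) ^ m / m !)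
          + ∫ t in x₀..x, 1 / ((j - 1)! : ℂ) * rsRemainder r₁ j x₀ t := by
      rw [← sub_eq_iff_eq_add', ← intervalIntegral.integral_sub (hRj x₀ x)
        ((by fun_prop : Continuous _).intervalIntegrable _ _)]
      refine intervalIntegral.integral_congr fun t ht => ?_
      simp only [ih x₀ t hx₀ (uIcc_of_le hx ▸ ht).1, add_sub_cancel_left]
    rw [hprim, hsplit, intervalIntegral.integral_const_mul, integral_sum_pow_div_factorial,
      integral_rsRemainder hx hr₁ hj, Finset.sum_range_succ']
    obtain ⟨i, rfl⟩ := Nat.exists_eq_add_of_le' hj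
    simp only [Nat.add_sub_add_right, Nat.add_sub_cancel, Nat.factorial_succ]
    push_cast
    field_simp
    ring

/-- Taylor expansion with Riemann–Stieltjes integral remainder for the iterated
antiderivatives r_j of a locally integrable (locally BV) function r₁ with
r₁(1) = 0. -/
theorem stmt15 (r₁ : ℝ → ℂ) (hloc : LocallyIntegrable r₁) (h1 : r₁ 1 = 0)
    (R : ℕ → ℝ → ℂ) (hR1 : R 1 = r₁)
    (hRrec : ∀ j : ℕ, 2 ≤ j → ∀ x : ℝ, R j x = ∫ t in (1 : ℝ)..x, R (j - 1) t) :
    ∀ j : ℕ, 1 ≤ j → ∀ x₀ x : ℝ, 1 ≤ x₀ → x₀ ≤ x →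
      R j x = (∑ m ∈ Finset.range j,
          R (j - m) x₀ * ((x - x₀ : ℂ)) ^ m / (Nat.factorial m : ℂ)) +
        (1 / (Nat.factorial (j - 1) : ℂ)) * rsRemainder r₁ j x₀ x :=
  stmt15_general r₁ hloc R hR1 hRrec
end
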